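/- arXiv:1105.4507 — 5 statements merged into one kernel-verified Lean document; each statement's English description precedes it below -/
import Mathlib

section
/- Let θ₀ > 0 and, for m = 1,…,k, let θ̂_m(n) be random variables with θ̂_m(n) = θ₀ + O_p(n^{-1/2}). Let γ_m(n) ≥ 0 be random weights with ∑_{m=1}^k γ_m(n) = 1 and set θ̂(n) = ∑_m γ_m(n) θ̂_m(n). Then Δ_n := ∑_m γ_m(n) θ̂_m(n) log(θ̂_m(n)) − θ̂(n) log(θ̂(n)) = O_p(n^{-1}). -/
open MeasureTheory Filter Finset

/-- `Y n = O_p(a n)`: the sequence of random variables `Y n` is stochastically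
bounded at rate `a n`. -/
def IsBigOp {Ω : Type*} [MeasurableSpace Ω] (P : Measure Ω)
    (Y : ℕ → Ω → ℝ) (a : ℕ → ℝ) : Prop :=
  ∀ ε : ℝ, 0 < ε → ∃ M : ℝ, ∀ᶠ n in atTop,
    P {ω | M * a n < |Y n ω|} ≤ ENNReal.ofReal ε

lemma pointwise_gap (a b : ℝ) (ha : 0 < a) (hb : 0 < b) :
    0 ≤ a * Real.log a - b * Real.log b - (Real.log b + 1) * (a - b) ∧
    a * Real.log a - b * Real.log b - (Real.log b + 1) * (a - b) ≤ (a - b)^2 / b := by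
  have hab : 0 < a / b := div_pos ha hb
  have hlog : Real.log (a / b) = Real.log a - Real.log b := Real.log_div ha.ne' hb.ne'
  have key : a * Real.log a - b * Real.log b - (Real.log b + 1) * (a - b)
      = a * Real.log (a/b) - (a - b) := by
    rw [hlog]; ring
  constructor
  · rw [key]
    have h1 : Real.log (b / a) ≤ b / a - 1 := Real.log_le_sub_one_of_pos (div_pos hb ha)
    have h2 : Real.log (b/a) = - Real.log (a/b) := by
      rw [← Real.log_inv]; congr 1; field_simp
    have h3 : 1 - b / a ≤ Real.log (a / b) := by rw [h2] at h1; linarith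
    have h4 := mul_le_mul_of_nonneg_left h3 ha.le
    have h5 : a * (1 - b / a) = a - b := by field_simp
    linarith [h4, h5.symm.le]
  · rw [key]
    have h1 : Real.log (a / b) ≤ a / b - 1 := Real.log_le_sub_one_of_pos hab
    have h2 : a * Real.log (a/b) ≤ a * (a/b - 1) := mul_le_mul_of_nonneg_left h1 ha.le
    have h3 : a * (a / b - 1) - (a-b) = (a-b)^2/b := by field_simp
    linarith

lemma gap_le {k : ℕ} (θ γ : Fin k → ℝ) (θ₀ δ : ℝ) (hθ₀ : 0 < θ₀)
    (hγ0 : ∀ m, 0 ≤ γ m) (hγ1 : ∑ m, γ m = 1)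
    (hδ2 : δ ≤ θ₀ / 2)
    (hnear : ∀ m, |θ m - θ₀| ≤ δ) :
    |∑ m, γ m * (θ m * Real.log (θ m)) -
      (∑ m, γ m * θ m) * Real.log (∑ m, γ m * θ m)| ≤ 8 * δ^2 / θ₀ := by
  classical
  by_cases hk : k = 0
  · subst hk
    simp only [Finset.univ_eq_empty, Finset.sum_empty] at hγ1
    norm_num at hγ1
  have hδ0 : 0 ≤ δ := by
    obtain ⟨m⟩ := Fin.pos_iff_nonempty.mp (Nat.pos_of_ne_zero hk)
    exact le_trans (abs_nonneg _) (hnear m)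
  set b := ∑ m, γ m * θ m with hb_def
  have hθpos : ∀ m, θ₀ / 2 ≤ θ m := fun m => by
    have := abs_le.mp (hnear m); linarith
  have hb_near : |b - θ₀| ≤ δ := by
    have h2 : ∑ m, γ m * (θ m - θ₀) = b - θ₀ := by
      have h3 : ∑ m, γ m * (θ m - θ₀) = ∑ m, (γ m * θ m - θ₀ * γ m) :=
        Finset.sum_congr rfl fun m _ => by ring
      rw [h3, Finset.sum_sub_distrib, ← Finset.mul_sum, hγ1, ← hb_def]; ring
    rw [← h2]
    calc |∑ m, γ m * (θ m - θ₀)| ≤ ∑ m, |γ m * (θ m - θ₀)| := Finset.abs_sum_le_sum_abs _ _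
      _ ≤ ∑ m, γ m * δ := by
          apply Finset.sum_le_sum
          intro m _
          rw [abs_mul, abs_of_nonneg (hγ0 m)]
          exact mul_le_mul_of_nonneg_left (hnear m) (hγ0 m)
      _ = δ := by rw [← Finset.sum_mul, hγ1, one_mul]
  have hbub : ∀ m, |θ m - b| ≤ 2 * δ := by
    intro m
    calc |θ m - b| ≤ |θ m - θ₀| + |θ₀ - b| := abs_sub_le _ _ _
      _ ≤ δ + δ := add_le_add (hnear m) (by rw [abs_sub_comm]; exact hb_near)
      _ = 2 * δ := by ring
  have hbpos : θ₀ / 2 ≤ b := by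
    have h : (∑ m, γ m * (θ₀ / 2)) ≤ b :=
      Finset.sum_le_sum fun m _ => mul_le_mul_of_nonneg_left (hθpos m) (hγ0 m)
    rwa [← Finset.sum_mul, hγ1, one_mul] at h
  have hbpos' : 0 < b := lt_of_lt_of_le (by linarith) hbpos
  have hθpos' : ∀ m, 0 < θ m := fun m => lt_of_lt_of_le (by linarith) (hθpos m)
  have decomp : ∑ m, γ m * (θ m * Real.log (θ m)) - b * Real.log b
      = ∑ m, γ m * (θ m * Real.log (θ m) - b * Real.log b - (Real.log b + 1) * (θ m - b)) := by
    have h1 : ∑ m, γ m * (θ m * Real.log (θ m) - b * Real.log b - (Real.log b + 1) * (θ m - b))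
        = ∑ m, (γ m * (θ m * Real.log (θ m)) - (b * Real.log b) * γ m
            - (Real.log b + 1) * (γ m * θ m) + ((Real.log b + 1) * b) * γ m) :=
      Finset.sum_congr rfl fun m _ => by ring
    rw [h1, Finset.sum_add_distrib, Finset.sum_sub_distrib, Finset.sum_sub_distrib,
        ← Finset.mul_sum, ← Finset.mul_sum, ← Finset.mul_sum, hγ1, ← hb_def]
    ring
  rw [decomp]
  have hnn : 0 ≤ ∑ m, γ m * (θ m * Real.log (θ m) - b * Real.log b - (Real.log b + 1) * (θ m - b)) :=
    Finset.sum_nonneg fun m _ =>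
      mul_nonneg (hγ0 m) (pointwise_gap (θ m) b (hθpos' m) hbpos').1
  rw [abs_of_nonneg hnn]
  have step : ∀ m, γ m * (θ m * Real.log (θ m) - b * Real.log b - (Real.log b + 1) * (θ m - b))
      ≤ γ m * (8 * δ^2 / θ₀) := by
    intro m
    apply mul_le_mul_of_nonneg_left _ (hγ0 m)
    calc θ m * Real.log (θ m) - b * Real.log b - (Real.log b + 1) * (θ m - b)
        ≤ (θ m - b)^2 / b := (pointwise_gap (θ m) b (hθpos' m) hbpos').2
      _ ≤ (2*δ)^2 / (θ₀/2) := by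
          apply div_le_div₀ (by positivity) _ (by linarith) hbpos
          have h := abs_le.mp (hbub m)
          exact sq_le_sq' (by linarith) h.2
      _ = 8 * δ^2 / θ₀ := by field_simp; ring
  calc (∑ m, γ m * (θ m * Real.log (θ m) - b * Real.log b - (Real.log b + 1) * (θ m - b)))
      ≤ ∑ m, γ m * (8 * δ^2 / θ₀) := Finset.sum_le_sum fun m _ => step m
    _ = 8 * δ^2 / θ₀ := by rw [← Finset.sum_mul, hγ1, one_mul]

/-- Convexity-gap rate: if `θ̂ₘ(n) = θ₀ + O_p(n^{-1/2})` with `θ₀ > 0`, the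
`γₘ(n)` are random convex weights, and `θ̂(n) = ∑ₘ γₘ θ̂ₘ`, then
`Δₙ = ∑ₘ γₘ θ̂ₘ log θ̂ₘ − θ̂ log θ̂ = O_p(n^{-1})`. -/
theorem stmt_5 {Ω : Type*} [MeasurableSpace Ω] (P : Measure Ω)
    [IsProbabilityMeasure P] {k : ℕ}
    (θhat : Fin k → ℕ → Ω → ℝ) (γ : Fin k → ℕ → Ω → ℝ) (θ₀ : ℝ) (hθ₀ : 0 < θ₀)
    (hrate : ∀ m, IsBigOp P (fun n ω => θhat m n ω - θ₀) (fun n => (Real.sqrt n)⁻¹))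
    (hγ0 : ∀ m n ω, 0 ≤ γ m n ω) (hγ1 : ∀ n ω, ∑ m, γ m n ω = 1) :
    IsBigOp P
      (fun n ω =>
        ∑ m, γ m n ω * (θhat m n ω * Real.log (θhat m n ω)) -
          (∑ m, γ m n ω * θhat m n ω) * Real.log (∑ m, γ m n ω * θhat m n ω))
      (fun n => ((n : ℝ))⁻¹) := by
  intro ε hε
  by_cases hk : k = 0
  · refine ⟨1, ?_⟩
    filter_upwards with n
    subst hk
    have he : {ω : Ω | 1 * ((n:ℝ))⁻¹ <
        |∑ m : Fin 0, γ m n ω * (θhat m n ω * Real.log (θhat m n ω)) -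
          (∑ m : Fin 0, γ m n ω * θhat m n ω) *
            Real.log (∑ m : Fin 0, γ m n ω * θhat m n ω)|} = ∅ := by
      ext ω
      simp only [Finset.univ_eq_empty, Finset.sum_empty, zero_mul, sub_zero, abs_zero,
        Set.mem_setOf_eq, one_mul, Set.mem_empty_iff_false, iff_false, not_lt]
      positivity
    rw [he]
    simp
  -- main case
  have hkpos : 0 < (k:ℝ) := by exact_mod_cast Nat.pos_of_ne_zero hk
  have hεk : 0 < ε / k := div_pos hε hkpos
  choose M hM using fun m => hrate m (ε/k) hεk
  set M' : ℝ := 1 + ∑ m, |M m| with hM'def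
  have hM'pos : 0 < M' := by positivity
  have hM'ge : ∀ m, M m ≤ M' := fun m => by
    have h1 : |M m| ≤ ∑ j, |M j| :=
      Finset.single_le_sum (f := fun j => |M j|) (fun j _ => abs_nonneg _) (mem_univ m)
    have := le_abs_self (M m)
    rw [hM'def]; linarith
  refine ⟨8 * M'^2 / θ₀, ?_⟩
  have hall : ∀ᶠ n : ℕ in atTop, ∀ m,
      P {ω | M m * (Real.sqrt (n:ℝ))⁻¹ < |θhat m n ω - θ₀|} ≤ ENNReal.ofReal (ε/k) :=
    eventually_all.mpr hM
  have hbig : ∀ᶠ n : ℕ in atTop, (2*M'/θ₀)^2 ≤ (n:ℝ) ∧ 1 ≤ n := by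
    filter_upwards [eventually_ge_atTop (⌈(2*M'/θ₀)^2⌉₊ + 1)] with n hn
    refine ⟨?_, by omega⟩
    calc (2*M'/θ₀)^2 ≤ (⌈(2*M'/θ₀)^2⌉₊ : ℝ) := Nat.le_ceil _
      _ ≤ (n : ℝ) := by exact_mod_cast Nat.le_of_succ_le hn
  filter_upwards [hall, hbig] with n hn hb
  obtain ⟨hb1, hb2⟩ := hb
  have hn1 : (1:ℝ) ≤ (n:ℝ) := by exact_mod_cast hb2
  have hnpos : (0:ℝ) < n := by linarith
  have hsq : 0 < Real.sqrt n := Real.sqrt_pos.mpr hnpos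
  have h2M : 2*M'/θ₀ ≤ Real.sqrt n := by
    have hnn : (n:ℝ) = Real.sqrt n * Real.sqrt n := (Real.mul_self_sqrt hnpos.le).symm
    nlinarith [hsq, div_pos (by linarith : (0:ℝ) < 2*M') hθ₀]
  have hδle : M' * (Real.sqrt n)⁻¹ ≤ θ₀ / 2 := by
    rw [mul_inv_le_iff₀ hsq]
    have := mul_le_mul_of_nonneg_left h2M (le_of_lt (by linarith : (0:ℝ) < θ₀/2))
    calc M' = θ₀/2 * (2*M'/θ₀) := by field_simp
      _ ≤ θ₀/2 * Real.sqrt n := this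
  have hsub : {ω | 8 * M'^2 / θ₀ * ((n:ℝ))⁻¹ <
      |∑ m, γ m n ω * (θhat m n ω * Real.log (θhat m n ω)) -
        (∑ m, γ m n ω * θhat m n ω) * Real.log (∑ m, γ m n ω * θhat m n ω)|}
      ⊆ ⋃ m : Fin k, {ω | M m * (Real.sqrt n)⁻¹ < |θhat m n ω - θ₀|} := by
    intro ω hω
    by_contra hmem
    simp only [Set.mem_iUnion, Set.mem_setOf_eq, not_exists, not_lt] at hmem
    have hnear : ∀ m, |θhat m n ω - θ₀| ≤ M' * (Real.sqrt n)⁻¹ := fun m =>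
      le_trans (hmem m) (mul_le_mul_of_nonneg_right (hM'ge m) (by positivity))
    have hgap := gap_le (fun m => θhat m n ω) (fun m => γ m n ω) θ₀
      (M' * (Real.sqrt n)⁻¹) hθ₀ (fun m => hγ0 m n ω) (hγ1 n ω) hδle hnear
    have heq : 8 * (M' * (Real.sqrt n)⁻¹)^2 / θ₀ = 8 * M'^2 / θ₀ * ((n:ℝ))⁻¹ := by
      have hs2 : (Real.sqrt n)^2 = (n:ℝ) := Real.sq_sqrt hnpos.le
      field_simp
      nlinarith [hs2]
    rw [heq] at hgap
    exact absurd hgap (not_le.mpr hω)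
  calc P {ω | 8 * M'^2 / θ₀ * ((n:ℝ))⁻¹ <
      |∑ m, γ m n ω * (θhat m n ω * Real.log (θhat m n ω)) -
        (∑ m, γ m n ω * θhat m n ω) * Real.log (∑ m, γ m n ω * θhat m n ω)|}
      ≤ P (⋃ m : Fin k, {ω | M m * (Real.sqrt n)⁻¹ < |θhat m n ω - θ₀|}) :=
        measure_mono hsub
    _ ≤ ∑ m : Fin k, P {ω | M m * (Real.sqrt n)⁻¹ < |θhat m n ω - θ₀|} :=
        measure_iUnion_fintype_le _ _
    _ ≤ ∑ _m : Fin k, ENNReal.ofReal (ε/k) := Finset.sum_le_sum fun m _ => hn m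
    _ = k * ENNReal.ofReal (ε/k) := by
        rw [Finset.sum_const, Finset.card_univ, Fintype.card_fin, nsmul_eq_mul]
    _ = ENNReal.ofReal ε := by
        rw [← ENNReal.ofReal_natCast k, ← ENNReal.ofReal_mul (by positivity)]
        congr 1
        field_simp
end

section
/- Under the hypotheses of the previous statement (θ̂_m = θ₀ + O_p(n^{-1/2}) with θ₀ > 0, convex random weights γ_m summing to 1, θ̂ = ∑ γ_m θ̂_m), one has the exact second-order representation Δ_n = (1/θ̂)·[∑_m γ_m (θ̂_m − θ₀)² − (θ̂ − θ₀)²] + O_p(n^{-1}). -/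
open MeasureTheory Filter Finset

lemma log_ineq {x y : ℝ} (hx : 0 < x) (hy : 0 < y) :
    0 ≤ x * (Real.log x - Real.log y) - (x - y) ∧
    x * (Real.log x - Real.log y) - (x - y) ≤ (x - y)^2 / y := by
  have h1 : Real.log (x / y) ≤ x / y - 1 := Real.log_le_sub_one_of_pos (div_pos hx hy)
  have h2 : Real.log (y / x) ≤ y / x - 1 := Real.log_le_sub_one_of_pos (div_pos hy hx)
  have e1 : Real.log (x / y) = Real.log x - Real.log y := Real.log_div hx.ne' hy.ne'
  have e2 : Real.log (y / x) = Real.log y - Real.log x := Real.log_div hy.ne' hx.ne'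
  rw [e1] at h1; rw [e2] at h2
  constructor
  · have h3 := mul_le_mul_of_nonneg_left h2 hx.le
    have h4 : x * (y / x - 1) = y - x := by field_simp
    nlinarith
  · have h3 := mul_le_mul_of_nonneg_left h1 hx.le
    have h4 : x * (x / y - 1) = (x - y)^2 / y + (x - y) := by field_simp; ring
    nlinarith

lemma det {k : ℕ} (γ x : Fin k → ℝ) (θ₀ δ : ℝ) (hθ₀ : 0 < θ₀)
    (hγ0 : ∀ m, 0 ≤ γ m) (hγ1 : ∑ m, γ m = 1)
    (hδ : δ ≤ θ₀ / 2) (hδ0 : 0 ≤ δ)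
    (hx : ∀ m, |x m - θ₀| ≤ δ) :
    |(∑ m, γ m * (x m * Real.log (x m)) -
        (∑ m, γ m * x m) * Real.log (∑ m, γ m * x m)) -
      (1 / (∑ m, γ m * x m)) *
        ((∑ m, γ m * (x m - θ₀) ^ 2) - ((∑ m, γ m * x m) - θ₀) ^ 2)| ≤
      8 / θ₀ * δ ^ 2 := by
  set xb : ℝ := ∑ m, γ m * x m with hxb
  have hxbd : |xb - θ₀| ≤ δ := by
    have h2 : ∑ m, γ m * (x m - θ₀) = (∑ m, γ m * x m) - (∑ m, γ m) * θ₀ := by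
      rw [Finset.sum_mul, ← Finset.sum_sub_distrib]
      exact Finset.sum_congr rfl fun m _ => by ring
    have h1 : xb - θ₀ = ∑ m, γ m * (x m - θ₀) := by
      rw [h2, hγ1, one_mul]
    calc |xb - θ₀| = |∑ m, γ m * (x m - θ₀)| := by rw [h1]
      _ ≤ ∑ m, |γ m * (x m - θ₀)| := Finset.abs_sum_le_sum_abs _ _
      _ ≤ ∑ m, γ m * δ := Finset.sum_le_sum fun m _ => by
          rw [abs_mul, abs_of_nonneg (hγ0 m)]
          exact mul_le_mul_of_nonneg_left (hx m) (hγ0 m)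
      _ = δ := by rw [← Finset.sum_mul, hγ1, one_mul]
  have hxbpos : θ₀ / 2 ≤ xb := by
    have := abs_le.1 hxbd; linarith
  have hxb0 : 0 < xb := by linarith
  have hxpos : ∀ m, 0 < x m := fun m => by
    have := abs_le.1 (hx m); linarith
  -- identity: bracket = ∑ γ (x - xb)^2
  have hid : (∑ m, γ m * (x m - θ₀) ^ 2) - (xb - θ₀) ^ 2 = ∑ m, γ m * (x m - xb) ^ 2 := by
    have e : ∀ y : ℝ, ∑ m, γ m * (x m - y) ^ 2
        = (∑ m, γ m * x m ^ 2) - 2 * y * xb + y ^ 2 := by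
      intro y
      have h3 : ∑ m, γ m * (x m - y) ^ 2
          = ∑ m, (γ m * x m ^ 2 - 2 * y * (γ m * x m) + y ^ 2 * γ m) :=
        Finset.sum_congr rfl fun m _ => by ring
      rw [h3, Finset.sum_add_distrib, Finset.sum_sub_distrib, ← Finset.mul_sum,
        ← Finset.mul_sum, hγ1, ← hxb]
      ring
    rw [e θ₀, e xb]; ring
  -- Δ rewrite
  have hΔ : (∑ m, γ m * (x m * Real.log (x m))) - xb * Real.log xb
      = ∑ m, γ m * (x m * (Real.log (x m) - Real.log xb) - (x m - xb)) := by
    have h3 : ∑ m, γ m * (x m * (Real.log (x m) - Real.log xb) - (x m - xb))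
        = ∑ m, (γ m * (x m * Real.log (x m)) - Real.log xb * (γ m * x m)
            - γ m * x m + xb * γ m) :=
      Finset.sum_congr rfl fun m _ => by ring
    rw [h3, Finset.sum_add_distrib, Finset.sum_sub_distrib, Finset.sum_sub_distrib,
      ← Finset.mul_sum, ← Finset.mul_sum, hγ1]
    ring
  have hΔ0 : 0 ≤ (∑ m, γ m * (x m * Real.log (x m))) - xb * Real.log xb := by
    rw [hΔ]
    exact Finset.sum_nonneg fun m _ =>
      mul_nonneg (hγ0 m) (log_ineq (hxpos m) hxb0).1
  have hΔle : (∑ m, γ m * (x m * Real.log (x m))) - xb * Real.log xb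
      ≤ 1 / xb * ∑ m, γ m * (x m - xb) ^ 2 := by
    rw [hΔ]
    calc ∑ m, γ m * (x m * (Real.log (x m) - Real.log xb) - (x m - xb))
        ≤ ∑ m, γ m * ((x m - xb) ^ 2 / xb) := Finset.sum_le_sum fun m _ =>
          mul_le_mul_of_nonneg_left (log_ineq (hxpos m) hxb0).2 (hγ0 m)
      _ = 1 / xb * ∑ m, γ m * (x m - xb) ^ 2 := by
          rw [Finset.mul_sum]
          exact Finset.sum_congr rfl fun m _ => by ring
  have hB0 : 0 ≤ ∑ m, γ m * (x m - xb) ^ 2 :=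
    Finset.sum_nonneg fun m _ => mul_nonneg (hγ0 m) (sq_nonneg _)
  have hBle : ∑ m, γ m * (x m - xb) ^ 2 ≤ 4 * δ ^ 2 := by
    calc ∑ m, γ m * (x m - xb) ^ 2 ≤ ∑ m, γ m * (4 * δ ^ 2) :=
        Finset.sum_le_sum fun m _ => by
          refine mul_le_mul_of_nonneg_left ?_ (hγ0 m)
          have h1 : |x m - xb| ≤ 2 * δ := by
            have := abs_le.1 (hx m); have := abs_le.1 hxbd
            rw [abs_le]; constructor <;> linarith
          nlinarith [abs_nonneg (x m - xb), sq_abs (x m - xb)]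
      _ = 4 * δ ^ 2 := by rw [← Finset.sum_mul, hγ1, one_mul]
  have hmain : 1 / xb * ∑ m, γ m * (x m - xb) ^ 2 ≤ 8 / θ₀ * δ ^ 2 := by
    have h1 : 1 / xb ≤ 2 / θ₀ := by
      rw [div_le_div_iff₀ hxb0 hθ₀]; linarith
    calc 1 / xb * ∑ m, γ m * (x m - xb) ^ 2
        ≤ 2 / θ₀ * ∑ m, γ m * (x m - xb) ^ 2 := mul_le_mul_of_nonneg_right h1 hB0
      _ ≤ 2 / θ₀ * (4 * δ ^ 2) := mul_le_mul_of_nonneg_left hBle (by positivity)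
      _ = 8 / θ₀ * δ ^ 2 := by ring
  rw [hid, abs_le]
  have hpos : (0:ℝ) ≤ 8 / θ₀ * δ ^ 2 := by positivity
  have hmul : 0 ≤ 1 / xb * ∑ m, γ m * (x m - xb) ^ 2 :=
    mul_nonneg (by positivity) hB0
  constructor <;> linarith

/-- Exact second-order representation of the convexity gap: under the same
hypotheses as the `O_p(n^{-1})` rate statement,
`Δₙ = (1/θ̂)·[∑ₘ γₘ (θ̂ₘ − θ₀)² − (θ̂ − θ₀)²] + O_p(n^{-1})`. -/
theorem stmt_6 {Ω : Type*} [MeasurableSpace Ω] (P : Measure Ω)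
    [IsProbabilityMeasure P] {k : ℕ}
    (θhat : Fin k → ℕ → Ω → ℝ) (γ : Fin k → ℕ → Ω → ℝ) (θ₀ : ℝ) (hθ₀ : 0 < θ₀)
    (hrate : ∀ m, IsBigOp P (fun n ω => θhat m n ω - θ₀) (fun n => (Real.sqrt n)⁻¹))
    (hγ0 : ∀ m n ω, 0 ≤ γ m n ω) (hγ1 : ∀ n ω, ∑ m, γ m n ω = 1) :
    IsBigOp P
      (fun n ω =>
        (∑ m, γ m n ω * (θhat m n ω * Real.log (θhat m n ω)) -
            (∑ m, γ m n ω * θhat m n ω) * Real.log (∑ m, γ m n ω * θhat m n ω)) -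
          (1 / (∑ m, γ m n ω * θhat m n ω)) *
            ((∑ m, γ m n ω * (θhat m n ω - θ₀) ^ 2) -
              ((∑ m, γ m n ω * θhat m n ω) - θ₀) ^ 2))
      (fun n => ((n : ℝ))⁻¹) := by
  intro ε hε
  have hε' : 0 < ε / (k + 1) := by positivity
  choose Ms hMs using fun m => hrate m (ε / (k + 1)) hε'
  set M : ℝ := 1 + ∑ m, |Ms m| with hM
  have hM1 : (1:ℝ) ≤ M := le_add_of_nonneg_right (Finset.sum_nonneg fun m _ => abs_nonneg _)
  have hMpos : (0:ℝ) < M := lt_of_lt_of_le one_pos hM1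
  have hMm : ∀ m, Ms m ≤ M := fun m => by
    have h1 : |Ms m| ≤ ∑ j, |Ms j| :=
      Finset.single_le_sum (f := fun j => |Ms j|) (fun j _ => abs_nonneg _) (Finset.mem_univ m)
    have := le_abs_self (Ms m); linarith
  refine ⟨8 * M ^ 2 / θ₀, ?_⟩
  have hN : ∀ᶠ n : ℕ in atTop, (2 * M / θ₀) ^ 2 ≤ (n : ℝ) :=
    tendsto_natCast_atTop_atTop.eventually_ge_atTop _
  have hall : ∀ᶠ n : ℕ in atTop, ∀ m,
      P {ω | Ms m * (Real.sqrt n)⁻¹ < |θhat m n ω - θ₀|} ≤ ENNReal.ofReal (ε / (k + 1)) :=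
    eventually_all.2 hMs
  filter_upwards [hN, hall, eventually_ge_atTop 1] with n hn hPn hn1
  have hn0 : (0:ℝ) < n := by exact_mod_cast hn1
  have hsq : (0:ℝ) < Real.sqrt n := Real.sqrt_pos.2 hn0
  set δ : ℝ := M * (Real.sqrt n)⁻¹ with hδdef
  have hδ0 : 0 ≤ δ := mul_nonneg hMpos.le (inv_nonneg.2 hsq.le)
  have hsqn : 2 * M / θ₀ ≤ Real.sqrt n := by
    have := Real.sqrt_le_sqrt hn
    rwa [Real.sqrt_sq (by positivity)] at this
  have hδθ : δ ≤ θ₀ / 2 := by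
    rw [hδdef]
    rw [mul_inv_le_iff₀ hsq]
    calc M = θ₀ / 2 * (2 * M / θ₀) := by field_simp
      _ ≤ θ₀ / 2 * Real.sqrt n := by
          exact mul_le_mul_of_nonneg_left hsqn (by positivity)
  have hδsq : 8 / θ₀ * δ ^ 2 = 8 * M ^ 2 / θ₀ * (n : ℝ)⁻¹ := by
    rw [hδdef, mul_pow, ← Real.sqrt_inv, Real.sq_sqrt (by positivity)]
    ring
  have hsub : {ω | 8 * M ^ 2 / θ₀ * (n : ℝ)⁻¹ <
        |(∑ m, γ m n ω * (θhat m n ω * Real.log (θhat m n ω)) -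
            (∑ m, γ m n ω * θhat m n ω) * Real.log (∑ m, γ m n ω * θhat m n ω)) -
          (1 / (∑ m, γ m n ω * θhat m n ω)) *
            ((∑ m, γ m n ω * (θhat m n ω - θ₀) ^ 2) -
              ((∑ m, γ m n ω * θhat m n ω) - θ₀) ^ 2)|} ⊆
      ⋃ m, {ω | Ms m * (Real.sqrt n)⁻¹ < |θhat m n ω - θ₀|} := by
    intro ω hω
    by_contra hcon
    simp only [Set.mem_iUnion, Set.mem_setOf_eq, not_exists, not_lt] at hcon
    have hx : ∀ m, |θhat m n ω - θ₀| ≤ δ := fun m => by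
      calc |θhat m n ω - θ₀| ≤ Ms m * (Real.sqrt n)⁻¹ := hcon m
        _ ≤ δ := mul_le_mul_of_nonneg_right (hMm m) (inv_nonneg.2 hsq.le)
    have := det (fun m => γ m n ω) (fun m => θhat m n ω) θ₀ δ hθ₀
      (fun m => hγ0 m n ω) (hγ1 n ω) hδθ hδ0 hx
    rw [hδsq] at this
    exact absurd hω (by simp only [Set.mem_setOf_eq, not_lt]; exact this)
  calc P _ ≤ P (⋃ m, {ω | Ms m * (Real.sqrt n)⁻¹ < |θhat m n ω - θ₀|}) :=
        measure_mono hsub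
    _ ≤ ∑' m, P {ω | Ms m * (Real.sqrt n)⁻¹ < |θhat m n ω - θ₀|} := measure_iUnion_le _
    _ = ∑ m, P {ω | Ms m * (Real.sqrt n)⁻¹ < |θhat m n ω - θ₀|} := tsum_fintype _
    _ ≤ ∑ _m : Fin k, ENNReal.ofReal (ε / (k + 1)) := Finset.sum_le_sum fun m _ => hPn m
    _ = (k : ENNReal) * ENNReal.ofReal (ε / (k + 1)) := by
        rw [Finset.sum_const, Finset.card_univ, Fintype.card_fin, nsmul_eq_mul]
    _ ≤ ENNReal.ofReal ε := by
        rw [← ENNReal.ofReal_natCast k, ← ENNReal.ofReal_mul (by positivity)]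
        refine ENNReal.ofReal_le_ofReal ?_
        have h1 : (k : ℝ) * (ε / (k + 1)) = ε * ((k : ℝ) / (k + 1)) := by ring
        rw [h1]
        have h2 : (k : ℝ) / (k + 1) ≤ 1 := by
          rw [div_le_one (by positivity)]; linarith
        exact mul_le_of_le_one_right hε.le h2
end

section
/- Let D_n be an i.i.d. sample from a discrete Bayesian network (G₀, P₀) with missing-value indicator vector Z (arbitrary joint distribution of (X,Z)). For any fixed DAG G, the empirical node-average log-likelihood l(G|D_n) = ∑_i ∑_{j∈Pa_i} θ̂_{i,j} ∑_{k∈X_i} θ̂_{i,kj} log θ̂_{i,kj} satisfies l(G|D_n) − l(G|G₀) = O_p(n^{-1/2}), where l(G|G₀) is the population node-average log-likelihood defined using the observed conditional probabilities θ_{i,j}(G|G₀), θ_{i,kj}(G|G₀). In particular l(G|D_n) →_p l(G|G₀). -/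
open MeasureTheory Filter Finset ProbabilityTheory
open scoped ENNReal NNReal

/-- Number of records among the first `n` samples falling in the event `E`. -/
noncomputable def cnt {Ω S : Type*} (X : ℕ → Ω → S) (E : Set S) (n : ℕ) (ω : Ω) : ℝ :=
  ∑ i ∈ Finset.range n, Set.indicator E (fun _ => (1 : ℝ)) (X i ω)

/-- The empirical node-average log-likelihood `l(G|D_n)`: for each node `i`,
`A i j` is the event "(X_i, Pa_i) fully observed and Pa_i = j" and `B i j k` is
the sub-event where moreover `X_i = k`; `θ̂_{i,j} = n_{i,j}/n_i` and
`θ̂_{i,kj} = n_{i,kj}/n_{i,j}` are the empirical available-case frequencies. -/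
noncomputable def empNAL {Ω S V : Type*} [Fintype V] {J K : V → Type*}
    [∀ i, Fintype (J i)] [∀ i, Fintype (K i)]
    (X : ℕ → Ω → S) (A : ∀ i, J i → Set S) (B : ∀ i, J i → K i → Set S)
    (n : ℕ) (ω : Ω) : ℝ :=
  ∑ i, ∑ j, (cnt X (A i j) n ω / cnt X (⋃ j', A i j') n ω) *
    ∑ k, (cnt X (B i j k) n ω / cnt X (A i j) n ω) *
      Real.log (cnt X (B i j k) n ω / cnt X (A i j) n ω)

/-- The population node-average log-likelihood `l(G|G₀)` computed from the law
`μ` of a single (partially observed) record, with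
`θ_{i,j}(G|G₀) = μ(A i j)/μ(⋃ j', A i j')` and
`θ_{i,kj}(G|G₀) = μ(B i j k)/μ(A i j)`; states of zero observation probability
contribute `0` (the conventions `x/0 = 0` and `Real.log 0 = 0` apply). -/
noncomputable def popNAL {S V : Type*} [Fintype V] {J K : V → Type*}
    [∀ i, Fintype (J i)] [∀ i, Fintype (K i)] [MeasurableSpace S]
    (μ : Measure S) (A : ∀ i, J i → Set S) (B : ∀ i, J i → K i → Set S) : ℝ :=
  ∑ i, ∑ j, ((μ (A i j)).toReal / (μ (⋃ j', A i j')).toReal) *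
    ∑ k, ((μ (B i j k)).toReal / (μ (A i j)).toReal) *
      Real.log ((μ (B i j k)).toReal / (μ (A i j)).toReal)

/-! ### Auxiliary material -/

noncomputable def hfun : ℝ × ℝ × ℝ → ℝ :=
  fun p => (p.1 / p.2.1) * ((p.2.2 / p.1) * Real.log (p.2.2 / p.1))

lemma hfun_zero {p : ℝ × ℝ × ℝ} (h : p.2.2 = 0) : hfun p = 0 := by
  simp [hfun, h]

lemma div_div_div_same' {n x y : ℝ} (hn : n ≠ 0) : (x / n) / (y / n) = x / y := by
  rcases eq_or_ne y 0 with h | h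
  · simp [h]
  · field_simp

lemma hfun_lipschitz {a b c : ℝ} (ha : 0 < a) (hb : 0 < b) (hc : 0 < c) :
    ∃ (K : NNReal) (δ : ℝ), 0 < δ ∧
      LipschitzOnWith K hfun (Metric.closedBall ((a, b, c) : ℝ × ℝ × ℝ) δ) := by
  have c1 : ContDiffAt ℝ 1 (fun p : ℝ × ℝ × ℝ => p.1) (a, b, c) := contDiff_fst.contDiffAt
  have c21 : ContDiffAt ℝ 1 (fun p : ℝ × ℝ × ℝ => p.2.1) (a, b, c) :=
    (contDiff_fst.comp contDiff_snd).contDiffAt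
  have c22 : ContDiffAt ℝ 1 (fun p : ℝ × ℝ × ℝ => p.2.2) (a, b, c) :=
    (contDiff_snd.comp contDiff_snd).contDiffAt
  have d1 : ContDiffAt ℝ 1 (fun p : ℝ × ℝ × ℝ => p.1 / p.2.1) (a, b, c) :=
    c1.div c21 hb.ne'
  have d2 : ContDiffAt ℝ 1 (fun p : ℝ × ℝ × ℝ => p.2.2 / p.1) (a, b, c) :=
    c22.div c1 ha.ne'
  have dlog : ContDiffAt ℝ 1 (fun p : ℝ × ℝ × ℝ => Real.log (p.2.2 / p.1)) (a, b, c) := by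
    have hne : c / a ≠ 0 := (div_pos hc ha).ne'
    exact ContDiffAt.comp ((a, b, c) : ℝ × ℝ × ℝ) (Real.contDiffAt_log.mpr hne) d2
  have hcd : ContDiffAt ℝ 1 hfun (a, b, c) := d1.mul (d2.mul dlog)
  obtain ⟨K, t, ht, hl⟩ := hcd.exists_lipschitzOnWith
  obtain ⟨δ, hδ, hsub⟩ := Metric.nhds_basis_closedBall.mem_iff.mp ht
  exact ⟨K, δ, hδ, hl.mono hsub⟩

lemma count_dev {Ω S : Type*} [MeasurableSpace Ω] [MeasurableSpace S]
    (P : Measure Ω) [IsProbabilityMeasure P]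
    (X : ℕ → Ω → S) (hmeas : ∀ i, Measurable (X i))
    (hindep : ProbabilityTheory.iIndepFun X P)
    (hident : ∀ i, P.map (X i) = P.map (X 0))
    {E : Set S} (hE : MeasurableSet E) {c : ℝ} (hc : 0 < c) {n : ℕ} (hn : 1 ≤ n) :
    P {ω | c / Real.sqrt n < |cnt X E n ω / n - ((P.map (X 0)) E).toReal|}
      ≤ ENNReal.ofReal (1 / (4 * c ^ 2)) := by
  set p : ℝ := ((P.map (X 0)) E).toReal with hp
  set φ : S → ℝ := fun s => Set.indicator E (fun _ => (1 : ℝ)) s with hφ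
  have hφmeas : Measurable φ := measurable_const.indicator hE
  set Y : ℕ → Ω → ℝ := fun i ω => φ (X i ω) with hY
  have hYmeas : ∀ i, Measurable (Y i) := fun i => hφmeas.comp (hmeas i)
  have hYbd : ∀ i ω, ‖Y i ω‖ ≤ 1 := by
    intro i ω
    simp only [hY, hφ, Set.indicator, Real.norm_eq_abs]
    split <;> norm_num
  have hY2 : ∀ i, MemLp (Y i) 2 P := fun i =>
    (memLp_top_of_bound (hYmeas i).aestronglyMeasurable 1
      (Filter.Eventually.of_forall (hYbd i))).mono_exponent le_top
  have hYint : ∀ i, ∫ ω, Y i ω ∂P = p := by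
    intro i
    have h1 : ∫ ω, Y i ω ∂P = ∫ s, φ s ∂(P.map (X i)) :=
      (integral_map (hmeas i).aemeasurable hφmeas.aestronglyMeasurable).symm
    rw [h1, hident i, hφ]
    rw [integral_indicator_const (1 : ℝ) hE]
    simp [hp, Measure.real]
  have hYsq : ∀ i, (Y i) ^ 2 = Y i := by
    intro i; funext ω
    simp only [Pi.pow_apply, hY, hφ, Set.indicator]
    split <;> norm_num
  have hvar : ∀ i, variance (Y i) P = p - p ^ 2 := by
    intro i
    rw [variance_eq_sub (hY2 i), hYsq i, hYint i]
  have hT2 : MemLp (∑ i ∈ Finset.range n, Y i) 2 P :=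
    memLp_finset_sum' _ fun i _ => hY2 i
  have hTmean : ∫ ω, (∑ i ∈ Finset.range n, Y i) ω ∂P = n * p := by
    simp only [Finset.sum_apply]
    rw [integral_finset_sum _ fun i _ => (hY2 i).integrable one_le_two]
    simp [hYint]
  have hTvar : variance (∑ i ∈ Finset.range n, Y i) P = n * (p - p ^ 2) := by
    rw [IndepFun.variance_sum (fun i _ => hY2 i)
      (fun i _ j _ hij => (hindep.indepFun hij).comp hφmeas hφmeas)]
    simp [hvar]
    ring
  have hnpos : (0 : ℝ) < n := by exact_mod_cast hn
  have hsq : (0 : ℝ) < Real.sqrt n := Real.sqrt_pos.mpr hnpos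
  have hcheb := meas_ge_le_variance_div_sq (μ := P) hT2
    (c := c * Real.sqrt n) (mul_pos hc hsq)
  have hTeq : ∀ ω, (∑ i ∈ Finset.range n, Y i) ω = cnt X E n ω := by
    intro ω; simp [Finset.sum_apply, cnt, hY, hφ]
  have hsub : {ω | c / Real.sqrt n < |cnt X E n ω / n - p|}
      ⊆ {ω | c * Real.sqrt n ≤
          |(∑ i ∈ Finset.range n, Y i) ω - ∫ x, (∑ i ∈ Finset.range n, Y i) x ∂P|} := by
    intro ω hω
    simp only [Set.mem_setOf_eq] at hω ⊢
    rw [hTeq ω, hTmean]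
    have key : cnt X E n ω - n * p = n * (cnt X E n ω / n - p) := by
      field_simp
    rw [key, abs_mul, abs_of_pos hnpos]
    have h1 : c * Real.sqrt n < n * |cnt X E n ω / n - p| := by
      calc c * Real.sqrt n = c * ((n : ℝ) / Real.sqrt n) := by rw [Real.div_sqrt]
        _ = n * (c / Real.sqrt n) := by ring
        _ < n * |cnt X E n ω / n - p| := (mul_lt_mul_iff_right₀ hnpos).mpr hω
    exact h1.le
  refine (measure_mono hsub).trans (hcheb.trans ?_)
  apply ENNReal.ofReal_le_ofReal
  rw [hTvar]
  have hden : (c * Real.sqrt n) ^ 2 = c ^ 2 * n := by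
    rw [mul_pow, Real.sq_sqrt hnpos.le]
  rw [hden]
  rw [div_le_div_iff₀ (by positivity) (by positivity)]
  nlinarith [sq_nonneg (p - 1 / 2), sq_nonneg p, hnpos]

/-- For an i.i.d. (possibly incomplete, arbitrary missingness distribution)
sample from a discrete Bayesian network and any fixed DAG `G` (encoded by the
events `A i j`, `B i j k` over the finite record space `S`), the empirical
node-average log-likelihood satisfies
`l(G|D_n) − l(G|G₀) = O_p(n^{-1/2})`; in particular `l(G|D_n) →_p l(G|G₀)`. -/
theorem stmt_10 {Ω S : Type*} [MeasurableSpace Ω] [MeasurableSpace S] [Fintype S]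
    {V : Type*} [Fintype V] {J K : V → Type*}
    [∀ i, Fintype (J i)] [∀ i, Fintype (K i)]
    (P : Measure Ω) [IsProbabilityMeasure P]
    (X : ℕ → Ω → S) (hmeas : ∀ i, Measurable (X i))
    (hindep : ProbabilityTheory.iIndepFun X P)
    (hident : ∀ i, P.map (X i) = P.map (X 0))
    (A : ∀ i, J i → Set S) (B : ∀ i, J i → K i → Set S)
    (hmA : ∀ i j, MeasurableSet (A i j)) (hmB : ∀ i j k, MeasurableSet (B i j k))
    (hBA : ∀ i j k, B i j k ⊆ A i j)
    (hAdisj : ∀ i, Pairwise (Function.onFun Disjoint (A i)))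
    (hBdisj : ∀ i j, Pairwise (Function.onFun Disjoint (B i j))) :
    IsBigOp P
      (fun n ω => empNAL X A B n ω - popNAL (P.map (X 0)) A B)
      (fun n => (Real.sqrt n)⁻¹) ∧
    ∀ ε : ℝ, 0 < ε →
      Tendsto (fun n => P {ω | ε < |empNAL X A B n ω - popNAL (P.map (X 0)) A B|})
        atTop (nhds 0) := by
  classical
  set μ := P.map (X 0) with hμdef
  have hμprob : IsProbabilityMeasure μ := Measure.isProbabilityMeasure_map (hmeas 0).aemeasurable
  -- triple abbreviations
  set Ae : (Σ i : V, J i × K i) → Set S := fun t => A t.1 t.2.1 with hAe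
  set Ue : (Σ i : V, J i × K i) → Set S := fun t => ⋃ j', A t.1 j' with hUe
  set Be : (Σ i : V, J i × K i) → Set S := fun t => B t.1 t.2.1 t.2.2 with hBe
  set vv : (Σ i : V, J i × K i) → ℝ × ℝ × ℝ :=
    fun t => ((μ (Ae t)).toReal, (μ (Ue t)).toReal, (μ (Be t)).toReal) with hvv
  set ww : ℕ → Ω → (Σ i : V, J i × K i) → ℝ × ℝ × ℝ :=
    fun n ω t => (cnt X (Ae t) n ω / n, cnt X (Ue t) n ω / n, cnt X (Be t) n ω / n) with hww
  have sum_tri : ∀ g : (Σ i : V, J i × K i) → ℝ,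
      ∑ t, g t = ∑ i, ∑ j, ∑ k, g ⟨i, (j, k)⟩ := by
    intro g
    rw [← Finset.univ_sigma_univ, Finset.sum_sigma]
    exact Finset.sum_congr rfl fun i _ => Fintype.sum_prod_type _
  have hemp : ∀ n : ℕ, 1 ≤ n → ∀ ω, empNAL X A B n ω = ∑ t, hfun (ww n ω t) := by
    intro n hn ω
    have hn0 : (n : ℝ) ≠ 0 := Nat.cast_ne_zero.2 (by omega)
    rw [sum_tri]
    unfold empNAL
    refine Finset.sum_congr rfl fun i _ => Finset.sum_congr rfl fun j _ => ?_
    rw [Finset.mul_sum]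
    refine Finset.sum_congr rfl fun k _ => ?_
    simp only [hww, hAe, hUe, hBe, hfun]
    rw [div_div_div_same' hn0, div_div_div_same' hn0]
  have hpop : popNAL μ A B = ∑ t, hfun (vv t) := by
    rw [sum_tri]
    unfold popNAL
    refine Finset.sum_congr rfl fun i _ => Finset.sum_congr rfl fun j _ => ?_
    rw [Finset.mul_sum]
    exact Finset.sum_congr rfl fun k _ => by simp [hfun, hvv, hAe, hUe, hBe]
  set pos : Finset (Σ i : V, J i × K i) := Finset.univ.filter fun t => μ (Be t) ≠ 0 with hpos
  have hnotpos : ∀ t ∉ pos, μ (Be t) = 0 := by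
    intro t ht
    by_contra hne
    exact ht (Finset.mem_filter.mpr ⟨Finset.mem_univ t, hne⟩)
  have hvpos : ∀ t ∈ pos, 0 < (μ (Ae t)).toReal ∧ 0 < (μ (Ue t)).toReal ∧
      0 < (μ (Be t)).toReal := by
    intro t ht
    have hB0 : μ (Be t) ≠ 0 := (Finset.mem_filter.mp ht).2
    have hBA' : Be t ⊆ Ae t := hBA _ _ _
    have hAU : Ae t ⊆ Ue t := Set.subset_iUnion (A t.1) t.2.1
    have h1 : 0 < (μ (Be t)).toReal := ENNReal.toReal_pos hB0 (measure_ne_top μ _)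
    have h2 : (μ (Be t)).toReal ≤ (μ (Ae t)).toReal :=
      ENNReal.toReal_mono (measure_ne_top μ _) (measure_mono hBA')
    have h3 : (μ (Ae t)).toReal ≤ (μ (Ue t)).toReal :=
      ENNReal.toReal_mono (measure_ne_top μ _) (measure_mono hAU)
    exact ⟨lt_of_lt_of_le h1 h2, lt_of_lt_of_le (lt_of_lt_of_le h1 h2) h3, h1⟩
  have hKex : ∀ t : (Σ i : V, J i × K i), ∃ (Kc : NNReal) (δ : ℝ), 0 < δ ∧
      (t ∈ pos → LipschitzOnWith Kc hfun (Metric.closedBall (vv t) δ)) := by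
    intro t
    by_cases ht : t ∈ pos
    · obtain ⟨h2, h3, h1⟩ := hvpos t ht
      obtain ⟨Kc, δ, hδ, hl⟩ := hfun_lipschitz h2 h3 h1
      exact ⟨Kc, δ, hδ, fun _ => hl⟩
    · exact ⟨1, 1, one_pos, fun h => absurd h ht⟩
  choose Kf δf hδf hlip using hKex
  -- null event
  set Nul : Set Ω := ⋃ (i : ℕ), ⋃ (t : Σ i : V, J i × K i), ⋃ (_ : t ∉ pos),
    X i ⁻¹' (Be t) with hNuldef
  have hNul : P Nul = 0 := by
    rw [hNuldef]
    refine measure_iUnion_null fun i => measure_iUnion_null fun t =>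
      measure_iUnion_null fun ht => ?_
    have hB0 : μ (Be t) = 0 := hnotpos t ht
    have hPB : P (X i ⁻¹' Be t) = μ (Be t) := by
      rw [← hident i]
      exact (Measure.map_apply (hmeas i) (hmB _ _ _)).symm
    rw [hPB, hB0]
  have hcnt0 : ∀ ω, ω ∉ Nul → ∀ t ∉ pos, ∀ n, cnt X (Be t) n ω = 0 := by
    intro ω hω t ht n
    unfold cnt
    apply Finset.sum_eq_zero
    intro i _
    have hx : X i ω ∉ Be t := by
      intro hx
      exact hω (Set.mem_iUnion.mpr ⟨i, Set.mem_iUnion.mpr ⟨t, Set.mem_iUnion.mpr ⟨ht, hx⟩⟩⟩)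
    simp [Set.indicator_of_notMem hx]
  -- measurable-set facts
  have hmUe : ∀ t : (Σ i : V, J i × K i), MeasurableSet (Ue t) :=
    fun t => MeasurableSet.iUnion fun j => hmA _ _
  -- the O_p statement
  have hbig : IsBigOp P
      (fun n ω => empNAL X A B n ω - popNAL μ A B) (fun n => (Real.sqrt n)⁻¹) := by
    intro ε hε
    set c : ℝ := Real.sqrt (3 * pos.card / ε) + 1 with hcdef
    have hc : 0 < c := by
      have h0 := Real.sqrt_nonneg (3 * (pos.card : ℝ) / ε)
      rw [hcdef]; linarith
    refine ⟨(∑ t ∈ pos, (Kf t : ℝ)) * c, ?_⟩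
    have hev2 : ∀ᶠ n : ℕ in atTop, ∀ t ∈ pos, c / Real.sqrt n ≤ δf t := by
      rw [eventually_all_finset]
      intro t ht
      filter_upwards [eventually_ge_atTop (max 1 ⌈(c / δf t) ^ 2⌉₊)] with n hn
      have hn1 : 1 ≤ n := le_trans (le_max_left _ _) hn
      have hnn : ((c / δf t) ^ 2 : ℝ) ≤ n :=
        le_trans (Nat.le_ceil _)
          (by exact_mod_cast Nat.cast_le.mpr (le_trans (le_max_right _ _) hn))
      have hsn : (0 : ℝ) < Real.sqrt n := Real.sqrt_pos.mpr (by exact_mod_cast hn1)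
      have h1 : c / δf t ≤ Real.sqrt n := by
        calc c / δf t ≤ |c / δf t| := le_abs_self _
          _ = Real.sqrt ((c / δf t) ^ 2) := (Real.sqrt_sq_eq_abs _).symm
          _ ≤ Real.sqrt n := Real.sqrt_le_sqrt hnn
      rw [div_le_iff₀ hsn]
      rw [div_le_iff₀ (hδf t)] at h1
      linarith
    filter_upwards [eventually_ge_atTop 1, hev2] with n hn1 hn2
    have hnR : (1 : ℝ) ≤ (n : ℝ) := by exact_mod_cast hn1
    have hsn : (0 : ℝ) < Real.sqrt n := Real.sqrt_pos.mpr (by linarith)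
    -- the key inclusion
    have hsub : {ω | (∑ t ∈ pos, (Kf t : ℝ)) * c * (Real.sqrt n)⁻¹ <
          |empNAL X A B n ω - popNAL μ A B|}
        ⊆ Nul ∪ ⋃ t ∈ pos,
          ({ω | c / Real.sqrt n < |cnt X (Ae t) n ω / n - (μ (Ae t)).toReal|} ∪
           {ω | c / Real.sqrt n < |cnt X (Ue t) n ω / n - (μ (Ue t)).toReal|} ∪
           {ω | c / Real.sqrt n < |cnt X (Be t) n ω / n - (μ (Be t)).toReal|}) := by
      intro ω hω
      by_contra hcon
      simp only [Set.mem_union, Set.mem_iUnion, Set.mem_setOf_eq, not_or, not_exists,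
        not_lt] at hcon
      obtain ⟨hωN, hωdev⟩ := hcon
      have hgood : ∀ t ∈ pos,
          |hfun (ww n ω t) - hfun (vv t)| ≤ (Kf t : ℝ) * (c / Real.sqrt n) := by
        intro t ht
        obtain ⟨⟨hd1, hd2⟩, hd3⟩ := hωdev t ht
        have hmem1 : vv t ∈ Metric.closedBall (vv t) (δf t) :=
          Metric.mem_closedBall_self (hδf t).le
        have hd : dist (ww n ω t) (vv t) ≤ c / Real.sqrt n := by
          simp only [hww, hvv, Prod.dist_eq, Real.dist_eq]
          exact max_le hd1 (max_le hd2 hd3)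
        have hmem2 : ww n ω t ∈ Metric.closedBall (vv t) (δf t) :=
          Metric.mem_closedBall.mpr (hd.trans (hn2 t ht))
        have hld := (hlip t ht).dist_le_mul _ hmem2 _ hmem1
        rw [Real.dist_eq] at hld
        exact hld.trans (mul_le_mul_of_nonneg_left hd (Kf t).coe_nonneg)
      have hsum : |empNAL X A B n ω - popNAL μ A B| ≤
          (∑ t ∈ pos, (Kf t : ℝ)) * c * (Real.sqrt n)⁻¹ := by
        rw [hemp n hn1 ω, hpop, ← Finset.sum_sub_distrib]
        calc |∑ t, (hfun (ww n ω t) - hfun (vv t))|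
            ≤ ∑ t, |hfun (ww n ω t) - hfun (vv t)| := Finset.abs_sum_le_sum_abs _ _
          _ = ∑ t ∈ pos, |hfun (ww n ω t) - hfun (vv t)| := by
              symm
              apply Finset.sum_subset (Finset.subset_univ pos)
              intro t _ ht
              have h1 : hfun (ww n ω t) = 0 :=
                hfun_zero (by simp [hww, hcnt0 ω hωN t ht n])
              have h2 : hfun (vv t) = 0 :=
                hfun_zero (by simp [hvv, hnotpos t ht])
              rw [h1, h2]
              simp
          _ ≤ ∑ t ∈ pos, (Kf t : ℝ) * (c / Real.sqrt n) := Finset.sum_le_sum hgood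
          _ = (∑ t ∈ pos, (Kf t : ℝ)) * c * (Real.sqrt n)⁻¹ := by
              rw [← Finset.sum_mul]
              ring
      exact absurd hω (by simpa [Set.mem_setOf_eq] using not_lt.mpr hsum)
    refine (measure_mono hsub).trans ?_
    refine (measure_union_le _ _).trans ?_
    rw [hNul, zero_add]
    refine (measure_biUnion_finset_le _ _).trans ?_
    have hone : ∀ t ∈ pos,
        P ({ω | c / Real.sqrt n < |cnt X (Ae t) n ω / n - (μ (Ae t)).toReal|} ∪
           {ω | c / Real.sqrt n < |cnt X (Ue t) n ω / n - (μ (Ue t)).toReal|} ∪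
           {ω | c / Real.sqrt n < |cnt X (Be t) n ω / n - (μ (Be t)).toReal|})
        ≤ 3 * ENNReal.ofReal (1 / (4 * c ^ 2)) := by
      intro t _
      refine (measure_union_le _ _).trans ?_
      refine le_trans (add_le_add (measure_union_le _ _) le_rfl) ?_
      have b1 := count_dev P X hmeas hindep hident (hmA t.1 t.2.1) hc hn1
      have b2 := count_dev P X hmeas hindep hident (hmUe t) hc hn1
      have b3 := count_dev P X hmeas hindep hident (hmB t.1 t.2.1 t.2.2) hc hn1
      calc P {ω | c / Real.sqrt n < |cnt X (Ae t) n ω / n - (μ (Ae t)).toReal|} +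
            P {ω | c / Real.sqrt n < |cnt X (Ue t) n ω / n - (μ (Ue t)).toReal|} +
            P {ω | c / Real.sqrt n < |cnt X (Be t) n ω / n - (μ (Be t)).toReal|}
          ≤ ENNReal.ofReal (1 / (4 * c ^ 2)) + ENNReal.ofReal (1 / (4 * c ^ 2)) +
            ENNReal.ofReal (1 / (4 * c ^ 2)) := by
            gcongr
        _ = 3 * ENNReal.ofReal (1 / (4 * c ^ 2)) := by ring
    refine (Finset.sum_le_sum hone).trans ?_
    rw [Finset.sum_const, nsmul_eq_mul]
    -- numeric bound
    have hcard : (pos.card : ℝ≥0∞) = ENNReal.ofReal (pos.card : ℝ) := by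
      rw [ENNReal.ofReal_natCast]
    have h3 : (3 : ℝ≥0∞) = ENNReal.ofReal (3 : ℝ) := by
      rw [ENNReal.ofReal_ofNat]
    rw [hcard, h3, ← ENNReal.ofReal_mul (p := (3:ℝ)) (by norm_num),
      ← ENNReal.ofReal_mul (p := ((pos.card : ℝ))) (Nat.cast_nonneg _)]
    apply ENNReal.ofReal_le_ofReal
    have hx : (0 : ℝ) ≤ 3 * (pos.card : ℝ) / ε :=
      div_nonneg (by have := Nat.cast_nonneg (α := ℝ) pos.card; linarith) hε.le
    have hc2 : 3 * (pos.card : ℝ) / ε ≤ c ^ 2 := by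
      rw [hcdef]
      nlinarith [Real.sq_sqrt hx, Real.sqrt_nonneg (3 * (pos.card : ℝ) / ε)]
    rw [div_le_iff₀ hε] at hc2
    have hcc : (0 : ℝ) < c ^ 2 := pow_pos hc 2
    have heq : (pos.card : ℝ) * (3 * (1 / (4 * c ^ 2))) = 3 * (pos.card : ℝ) / (4 * c ^ 2) := by
      ring
    rw [heq, div_le_iff₀ (by linarith : (0:ℝ) < 4 * c ^ 2)]
    nlinarith [mul_nonneg (sq_nonneg c) hε.le]
  refine ⟨hbig, ?_⟩
  intro ε hε
  rw [ENNReal.tendsto_nhds_zero]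
  intro η hη
  obtain ⟨r, hr0, hrη⟩ : ∃ r : ℝ, 0 < r ∧ ENNReal.ofReal r ≤ η := by
    rcases eq_or_ne η ⊤ with h | h
    · exact ⟨1, one_pos, by simp [h]⟩
    · exact ⟨η.toReal, ENNReal.toReal_pos hη.ne' h, by rw [ENNReal.ofReal_toReal h]⟩
  obtain ⟨M, hM⟩ := hbig r hr0
  have hev : ∀ᶠ n : ℕ in atTop, M * (Real.sqrt n)⁻¹ < ε := by
    filter_upwards [eventually_ge_atTop (max 1 ⌈((|M| + 1) / ε) ^ 2⌉₊)] with n hn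
    have hn1 : 1 ≤ n := le_trans (le_max_left _ _) hn
    have hnn : (((|M| + 1) / ε) ^ 2 : ℝ) ≤ n :=
      le_trans (Nat.le_ceil _)
        (by exact_mod_cast Nat.cast_le.mpr (le_trans (le_max_right _ _) hn))
    have hsn : (0 : ℝ) < Real.sqrt n := Real.sqrt_pos.mpr (by exact_mod_cast hn1)
    have hMε : (0 : ℝ) < |M| + 1 := by positivity
    have h1 : (|M| + 1) / ε ≤ Real.sqrt n := by
      calc (|M| + 1) / ε ≤ |(|M| + 1) / ε| := le_abs_self _
        _ = Real.sqrt (((|M| + 1) / ε) ^ 2) := (Real.sqrt_sq_eq_abs _).symm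
        _ ≤ Real.sqrt n := Real.sqrt_le_sqrt hnn
    rw [div_le_iff₀ hε] at h1
    have h2 : M * (Real.sqrt n)⁻¹ ≤ |M| * (Real.sqrt n)⁻¹ := by
      apply mul_le_mul_of_nonneg_right (le_abs_self M) (by positivity)
    have h3 : |M| * (Real.sqrt n)⁻¹ < ε := by
      rw [mul_inv_lt_iff₀ hsn]
      nlinarith
    linarith
  filter_upwards [hM, hev] with n h1 h2
  refine le_trans (measure_mono ?_) (h1.trans hrη)
  intro ω hω
  simp only [Set.mem_setOf_eq] at hω ⊢
  linarith
end

section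
/- Suppose the missingness indicator Z is independent of X (MCAR) for a discrete Bayesian network (G₀,P₀). If G is any DAG on the same nodes with G₀ ⊆ G (every edge of G₀ is an edge of G), then the population node-average log-likelihood satisfies l(G|G₀) = l(G₀|G₀). -/
open Finset

/-- The marginal probability of the event "the coordinates in `s` agree with
`x`", under the joint pmf `p` on the product of the finite node state spaces. -/
noncomputable def margin {V : Type*} [Fintype V] [DecidableEq V] {K : V → Type*}
    [∀ i, Fintype (K i)] [∀ i, DecidableEq (K i)]
    (p : (∀ i, K i) → ℝ) (s : Finset V) (x : ∀ i, K i) : ℝ :=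
  ∑ y, if ∀ i ∈ s, y i = x i then p y else 0

/-- The conditional probability `P(X_i = x_i | X_s = x_s)` (with `y/0 = 0`
when the conditioning event has probability zero). -/
noncomputable def condP {V : Type*} [Fintype V] [DecidableEq V] {K : V → Type*}
    [∀ i, Fintype (K i)] [∀ i, DecidableEq (K i)]
    (p : (∀ i, K i) → ℝ) (i : V) (s : Finset V) (x : ∀ i, K i) : ℝ :=
  margin p (insert i s) x / margin p s x

/-- The population node-average log-likelihood of the DAG with parent map `Pa`
with respect to the true joint distribution `p` (under MCAR missingness the
observed conditional probabilities are the conditionals of `p`):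
`l(G) = ∑ i, ∑ x, p x * log P(X_i = x_i | Pa_i = x_{Pa_i})`. -/
noncomputable def nal {V : Type*} [Fintype V] [DecidableEq V] {K : V → Type*}
    [∀ i, Fintype (K i)] [∀ i, DecidableEq (K i)]
    (p : (∀ i, K i) → ℝ) (Pa : V → Finset V) : ℝ :=
  ∑ i, ∑ x, p x * Real.log (condP p i (Pa i) x)

section aux
variable {V : Type*} [Fintype V] [DecidableEq V] {K : V → Type*}
    [∀ i, Fintype (K i)] [∀ i, DecidableEq (K i)]

variable (p : (∀ i, K i) → ℝ)

lemma condP_nonneg (hp : ∀ x, 0 ≤ p x) (i : V) (s : Finset V) (x : ∀ i, K i) :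
    0 ≤ condP p i s x := by
  have h1 : 0 ≤ margin p (insert i s) x := by
    refine Finset.sum_nonneg fun y _ => ?_
    split <;> [exact hp y; exact le_refl 0]
  have h2 : 0 ≤ margin p s x := by
    refine Finset.sum_nonneg fun y _ => ?_
    split <;> [exact hp y; exact le_refl 0]
  exact div_nonneg h1 h2

lemma margin_congr {s : Finset V} {x x' : ∀ i, K i}
    (h : ∀ i ∈ s, x i = x' i) : margin p s x = margin p s x' := by
  refine Finset.sum_congr rfl fun y _ => ?_
  have : (∀ i ∈ s, y i = x i) ↔ (∀ i ∈ s, y i = x' i) :=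
    ⟨fun H i hi => (H i hi).trans (h i hi), fun H i hi => (H i hi).trans (h i hi).symm⟩
  simp only [this]

lemma margin_update {s : Finset V} {m : V} (hm : m ∉ s)
    (x : ∀ i, K i) (k : K m) :
    margin p s (Function.update x m k) = margin p s x := by
  refine margin_congr p fun i hi => ?_
  exact Function.update_of_ne (by rintro rfl; exact hm hi) k x

lemma condP_update {i : V} {s : Finset V} {m : V} (hm : m ∉ insert i s)
    (x : ∀ i, K i) (k : K m) :
    condP p i s (Function.update x m k) = condP p i s x := by
  unfold condP
  rw [margin_update p hm, margin_update p (fun h => hm (Finset.mem_insert_of_mem h))]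

lemma margin_nonneg (hp : ∀ x, 0 ≤ p x) (s : Finset V) (x : ∀ i, K i) :
    0 ≤ margin p s x := by
  refine Finset.sum_nonneg fun y _ => ?_
  split <;> [exact hp y; exact le_refl 0]

lemma self_le_margin (hp : ∀ x, 0 ≤ p x) (s : Finset V) (x : ∀ i, K i) :
    p x ≤ margin p s x := by
  have := Finset.single_le_sum (f := fun y => if ∀ i ∈ s, y i = x i then p y else 0)
    (fun y _ => by split <;> [exact hp y; exact le_refl 0]) (Finset.mem_univ x)
  simpa [margin] using this

lemma margin_univ (x : ∀ i, K i) : margin p Finset.univ x = p x := by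
  unfold margin
  rw [Finset.sum_eq_single x]
  · simp
  · intro y _ hy
    rw [if_neg]
    intro h
    exact hy (funext fun i => h i (Finset.mem_univ i))
  · simp

lemma sum_margin_insert {s : Finset V} {m : V} (hm : m ∉ s)
    (x : ∀ i, K i) :
    ∑ k, margin p (insert m s) (Function.update x m k) = margin p s x := by
  unfold margin
  rw [Finset.sum_comm]
  refine Finset.sum_congr rfl fun y _ => ?_
  have hcond : ∀ k : K m, (∀ i ∈ insert m s, y i = Function.update x m k i) ↔
      (k = y m ∧ ∀ i ∈ s, y i = x i) := by
    intro k
    rw [Finset.forall_mem_insert]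
    constructor
    · rintro ⟨h1, h2⟩
      refine ⟨by rw [Function.update_self] at h1; exact h1.symm, fun i hi => ?_⟩
      have := h2 i hi
      rwa [Function.update_of_ne (by rintro rfl; exact hm hi)] at this
    · rintro ⟨h1, h2⟩
      refine ⟨by rw [Function.update_self]; exact h1.symm, fun i hi => ?_⟩
      rw [Function.update_of_ne (by rintro rfl; exact hm hi)]
      exact h2 i hi
  simp only [hcond]
  by_cases hC : ∀ i ∈ s, y i = x i
  · have h1 : ∑ k : K m, (if k = y m ∧ (∀ i ∈ s, y i = x i) then p y else 0)
        = ∑ k : K m, (if k = y m then p y else 0) :=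
      Finset.sum_congr rfl fun k _ => if_congr (and_iff_left hC) rfl rfl
    rw [if_pos hC, h1, Finset.sum_ite_eq' Finset.univ (y m) (fun _ => p y)]
    simp
  · rw [if_neg hC]
    exact Finset.sum_eq_zero fun k _ => if_neg (fun h => hC h.2)

lemma sum_condP_update {s : Finset V} {m : V} (hm : m ∉ s) (x : ∀ i, K i) :
    ∑ k, condP p m s (Function.update x m k)
      = if margin p s x = 0 then 0 else 1 := by
  unfold condP
  have hden : ∀ k : K m, margin p s (Function.update x m k) = margin p s x :=
    fun k => margin_update p hm x k
  have : ∑ k, margin p (insert m s) (Function.update x m k) / margin p s (Function.update x m k)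
      = (∑ k, margin p (insert m s) (Function.update x m k)) / margin p s x := by
    rw [Finset.sum_div]
    exact Finset.sum_congr rfl fun k _ => by rw [hden k]
  rw [this, sum_margin_insert p hm]
  split
  · next h => rw [h, div_zero]
  · next h => exact div_self h

set_option linter.unusedSectionVars false in
lemma update_piSplitAt_symm (m : V) (a k : K m) (g : ∀ j : {j // j ≠ m}, K j) :
    Function.update ((Equiv.piSplitAt m K).symm (a, g)) m k
      = (Equiv.piSplitAt m K).symm (k, g) := by
  funext j
  rcases eq_or_ne j m with rfl | hj
  · simp [Equiv.piSplitAt]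
  · simp [Equiv.piSplitAt, Function.update_of_ne hj, hj]

lemma sum_update_card (m : V) (F : (∀ i, K i) → ℝ) :
    ∑ y : ∀ i, K i, ∑ k : K m, F (Function.update y m k)
      = (Fintype.card (K m) : ℝ) * ∑ y : ∀ i, K i, F y := by
  rw [← Equiv.sum_comp (Equiv.piSplitAt m K).symm
      (fun y => ∑ k : K m, F (Function.update y m k)),
    ← Equiv.sum_comp (Equiv.piSplitAt m K).symm F]
  rw [Fintype.sum_prod_type, Fintype.sum_prod_type]
  simp only [update_piSplitAt_symm]
  rw [Finset.sum_const, nsmul_eq_mul, Finset.card_univ, Finset.sum_comm]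

/-- E1 : total mass of a margin. -/
lemma sum_margin_total (hsum : ∑ x, p x = 1) :
    ∀ (n : ℕ) (T : Finset V), Tᶜ.card = n →
      ∑ y, margin p T y = ∏ i ∈ Tᶜ, (Fintype.card (K i) : ℝ) := by
  intro n
  induction n with
  | zero =>
    intro T hT
    have hTu : T = Finset.univ := by
      have := Finset.card_eq_zero.1 hT
      rwa [Finset.compl_eq_empty_iff] at this
    subst hTu
    simp only [margin_univ p, hsum]
    simp
  | succ n ih =>
    intro T hT
    have hne : Tᶜ.Nonempty := Finset.card_pos.1 (by omega)
    obtain ⟨m, hm⟩ := hne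
    have hmT : m ∉ T := Finset.mem_compl.1 hm
    have hcard : (insert m T)ᶜ.card = n := by
      simp [Finset.compl_insert, Finset.card_erase_of_mem hm, hT]
    calc ∑ y, margin p T y
        = ∑ y, ∑ k, margin p (insert m T) (Function.update y m k) :=
          Finset.sum_congr rfl fun y _ => (sum_margin_insert p hmT y).symm
      _ = (Fintype.card (K m) : ℝ) * ∑ y, margin p (insert m T) y :=
          sum_update_card m _
      _ = (Fintype.card (K m) : ℝ) * ∏ i ∈ (insert m T)ᶜ, (Fintype.card (K i) : ℝ) := by
          rw [ih _ hcard]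
      _ = ∏ i ∈ Tᶜ, (Fintype.card (K i) : ℝ) := by
          rw [Finset.compl_insert]
          exact Finset.mul_prod_erase Tᶜ (fun i => (Fintype.card (K i) : ℝ)) hm


/-- Ancestral set predicate. -/
def Anc (Pa₀ : V → Finset V) (T : Finset V) : Prop := ∀ j ∈ T, Pa₀ j ⊆ T

variable {Pa₀ : V → Finset V} {r : V → ℕ}

/-- E3 : pointwise inequality for ancestral sets. -/
lemma margin_le_prod (hp : ∀ x, 0 ≤ p x)
    (h0 : ∀ i, ∀ j ∈ Pa₀ i, r j < r i)
    (hfact : ∀ x, p x = ∏ i, condP p i (Pa₀ i) x) :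
    ∀ (n : ℕ) (T : Finset V), Tᶜ.card = n → Anc Pa₀ T →
      ∀ x, margin p T x ≤ ∏ j ∈ T, condP p j (Pa₀ j) x := by
  intro n
  induction n with
  | zero =>
    intro T hT _ x
    have hTu : T = Finset.univ := by
      have := Finset.card_eq_zero.1 hT
      rwa [Finset.compl_eq_empty_iff] at this
    subst hTu
    rw [margin_univ p, hfact x]
  | succ n ih =>
    intro T hT hanc x
    have hne : Tᶜ.Nonempty := Finset.card_pos.1 (by omega)
    obtain ⟨m, hm, hmin⟩ := Finset.exists_min_image Tᶜ r hne
    have hmT : m ∉ T := Finset.mem_compl.1 hm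
    have hcard : (insert m T)ᶜ.card = n := by
      simp [Finset.compl_insert, Finset.card_erase_of_mem hm, hT]
    have hanc' : Anc Pa₀ (insert m T) := by
      intro j hj
      rcases Finset.mem_insert.1 hj with rfl | hj
      · intro j' hj'
        by_cases hjT : j' ∈ T
        · exact Finset.mem_insert_of_mem hjT
        · exact absurd (h0 j j' hj') (not_lt.2 (hmin j' (Finset.mem_compl.2 hjT)))
      · exact (hanc j hj).trans (Finset.subset_insert m T)
    have hupd : ∀ (k : K m) (j), j ∈ T →
        condP p j (Pa₀ j) (Function.update x m k) = condP p j (Pa₀ j) x := by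
      intro k j hj
      refine condP_update p ?_ x k
      intro hmem
      rcases Finset.mem_insert.1 hmem with rfl | hmem
      · exact hmT hj
      · exact hmT (hanc j hj hmem)
    have hmm : m ∉ Pa₀ m := fun h => lt_irrefl _ (h0 m m h)
    calc margin p T x
        = ∑ k, margin p (insert m T) (Function.update x m k) :=
          (sum_margin_insert p hmT x).symm
      _ ≤ ∑ k, ∏ j ∈ insert m T, condP p j (Pa₀ j) (Function.update x m k) :=
          Finset.sum_le_sum fun k _ => ih _ hcard hanc' _
      _ = ∑ k, condP p m (Pa₀ m) (Function.update x m k)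
            * ∏ j ∈ T, condP p j (Pa₀ j) x := by
          refine Finset.sum_congr rfl fun k _ => ?_
          rw [Finset.prod_insert hmT]
          congr 1
          exact Finset.prod_congr rfl fun j hj => hupd k j hj
      _ = (∑ k, condP p m (Pa₀ m) (Function.update x m k))
            * ∏ j ∈ T, condP p j (Pa₀ j) x := by rw [Finset.sum_mul]
      _ ≤ 1 * ∏ j ∈ T, condP p j (Pa₀ j) x := by
          refine mul_le_mul_of_nonneg_right ?_
            (Finset.prod_nonneg fun j _ => condP_nonneg p hp j (Pa₀ j) x)
          rw [sum_condP_update p hmm x]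
          split <;> norm_num
      _ = ∏ j ∈ T, condP p j (Pa₀ j) x := one_mul _

/-- E2 : total mass of the product upper bound. -/
lemma sum_prod_le (hp : ∀ x, 0 ≤ p x) (hsum : ∑ x, p x = 1)
    (h0 : ∀ i, ∀ j ∈ Pa₀ i, r j < r i) :
    ∀ (n : ℕ) (T : Finset V), T.card = n → Anc Pa₀ T →
      ∑ y, ∏ j ∈ T, condP p j (Pa₀ j) y ≤ ∏ i ∈ Tᶜ, (Fintype.card (K i) : ℝ) := by
  have hne : Nonempty (∀ i, K i) := by
    by_contra h
    rw [not_nonempty_iff] at h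
    rw [Finset.sum_eq_zero (fun y _ => (h.false y).elim)] at hsum
    norm_num at hsum
  have hKne : ∀ i, Nonempty (K i) := fun i => ⟨Classical.arbitrary (∀ i, K i) i⟩
  intro n
  induction n with
  | zero =>
    intro T hT _
    have : T = (∅ : Finset V) := Finset.card_eq_zero.1 hT
    subst this
    simp only [Finset.prod_empty, Finset.compl_empty]
    rw [Finset.sum_const, nsmul_eq_mul, mul_one, Finset.card_univ, Fintype.card_pi]
    rw [Nat.cast_prod]
  | succ n ih =>
    intro T hT hanc
    have hTne : T.Nonempty := Finset.card_pos.1 (by omega)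
    obtain ⟨m, hm, hmax⟩ := Finset.exists_max_image T r hTne
    have hcard : (T.erase m).card = n := by
      simp [Finset.card_erase_of_mem hm, hT]
    have hanc' : Anc Pa₀ (T.erase m) := by
      intro j hj j' hj'
      have hjT := Finset.mem_of_mem_erase hj
      have hj'T : j' ∈ T := hanc j hjT hj'
      refine Finset.mem_erase.2 ⟨?_, hj'T⟩
      rintro rfl
      exact absurd (h0 j j' hj') (not_lt.2 (hmax j hjT))
    have hmm : m ∉ Pa₀ m := fun h => lt_irrefl _ (h0 m m h)
    have hupd : ∀ (y : ∀ i, K i) (k : K m) (j), j ∈ T.erase m →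
        condP p j (Pa₀ j) (Function.update y m k) = condP p j (Pa₀ j) y := by
      intro y k j hj
      obtain ⟨hjm, hjT⟩ := Finset.mem_erase.1 hj
      refine condP_update p ?_ y k
      intro hmem
      rcases Finset.mem_insert.1 hmem with h | h
      · exact hjm h.symm
      · exact absurd (h0 j m h) (not_lt.2 (hmax j hjT))
    have hKm : (0 : ℝ) < (Fintype.card (K m) : ℝ) := by
      have := Fintype.card_pos_iff.2 (hKne m)
      exact_mod_cast this
    have key : (Fintype.card (K m) : ℝ) * ∑ y, ∏ j ∈ T, condP p j (Pa₀ j) y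
        ≤ (Fintype.card (K m) : ℝ) * ∏ i ∈ Tᶜ, (Fintype.card (K i) : ℝ) := by
      rw [← sum_update_card m (fun y => ∏ j ∈ T, condP p j (Pa₀ j) y)]
      have step1 : ∀ y : ∀ i, K i,
          ∑ k, ∏ j ∈ T, condP p j (Pa₀ j) (Function.update y m k)
            ≤ ∏ j ∈ T.erase m, condP p j (Pa₀ j) y := by
        intro y
        have : ∀ k : K m, ∏ j ∈ T, condP p j (Pa₀ j) (Function.update y m k)
            = condP p m (Pa₀ m) (Function.update y m k)
              * ∏ j ∈ T.erase m, condP p j (Pa₀ j) y := by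
          intro k
          rw [← Finset.mul_prod_erase T _ hm]
          congr 1
          exact Finset.prod_congr rfl fun j hj => hupd y k j hj
        calc ∑ k, ∏ j ∈ T, condP p j (Pa₀ j) (Function.update y m k)
            = (∑ k, condP p m (Pa₀ m) (Function.update y m k))
              * ∏ j ∈ T.erase m, condP p j (Pa₀ j) y := by
              rw [Finset.sum_mul]
              exact Finset.sum_congr rfl fun k _ => this k
          _ ≤ 1 * ∏ j ∈ T.erase m, condP p j (Pa₀ j) y := by
              refine mul_le_mul_of_nonneg_right ?_
                (Finset.prod_nonneg fun j _ => condP_nonneg p hp j (Pa₀ j) y)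
              rw [sum_condP_update p hmm y]
              split <;> norm_num
          _ = ∏ j ∈ T.erase m, condP p j (Pa₀ j) y := one_mul _
      calc ∑ y, ∑ k, ∏ j ∈ T, condP p j (Pa₀ j) (Function.update y m k)
          ≤ ∑ y, ∏ j ∈ T.erase m, condP p j (Pa₀ j) y :=
            Finset.sum_le_sum fun y _ => step1 y
        _ ≤ ∏ i ∈ (T.erase m)ᶜ, (Fintype.card (K i) : ℝ) := ih _ hcard hanc'
        _ = (Fintype.card (K m) : ℝ) * ∏ i ∈ Tᶜ, (Fintype.card (K i) : ℝ) := by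
            have hmc : m ∉ Tᶜ := fun h => (Finset.mem_compl.1 h) hm
            have : (T.erase m)ᶜ = insert m Tᶜ := by
              ext j
              simp only [Finset.mem_compl, Finset.mem_erase, Finset.mem_insert, not_and]
              by_cases hjm : j = m <;> simp [hjm]
            rw [this, Finset.prod_insert hmc]
    exact le_of_mul_le_mul_left key hKm

/-- Lemma A : margins of ancestral sets factorize. -/
lemma margin_eq_prod (hp : ∀ x, 0 ≤ p x) (hsum : ∑ x, p x = 1)
    (h0 : ∀ i, ∀ j ∈ Pa₀ i, r j < r i)
    (hfact : ∀ x, p x = ∏ i, condP p i (Pa₀ i) x)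
    (T : Finset V) (hanc : Anc Pa₀ T) (x : ∀ i, K i) :
    margin p T x = ∏ j ∈ T, condP p j (Pa₀ j) x := by
  have hle : ∀ y, margin p T y ≤ ∏ j ∈ T, condP p j (Pa₀ j) y :=
    margin_le_prod p hp h0 hfact Tᶜ.card T rfl hanc
  have hzero : ∑ y, (∏ j ∈ T, condP p j (Pa₀ j) y - margin p T y) = 0 := by
    have h1 := sum_prod_le p hp hsum h0 T.card T rfl hanc
    have h2 := sum_margin_total p hsum Tᶜ.card T rfl
    have h3 : (0:ℝ) ≤ ∑ y, (∏ j ∈ T, condP p j (Pa₀ j) y - margin p T y) :=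
      Finset.sum_nonneg fun y _ => sub_nonneg.2 (hle y)
    have h4 : ∑ y, (∏ j ∈ T, condP p j (Pa₀ j) y - margin p T y) ≤ 0 := by
      rw [Finset.sum_sub_distrib, h2]
      linarith
    linarith
  have := (Finset.sum_eq_zero_iff_of_nonneg
    (fun y _ => sub_nonneg.2 (hle y))).1 hzero x (Finset.mem_univ x)
  linarith


end aux

section closure
variable {V : Type*} [DecidableEq V]

/-- Ancestral closure of a single node. -/
def ancCl (Pa₀ : V → Finset V) (r : V → ℕ) (h0 : ∀ i, ∀ j ∈ Pa₀ i, r j < r i)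
    (i : V) : Finset V :=
  insert i ((Pa₀ i).attach.biUnion fun j => ancCl Pa₀ r h0 j)
termination_by r i
decreasing_by exact h0 i _ j.2

variable {Pa₀ : V → Finset V} {r : V → ℕ} (h0 : ∀ i, ∀ j ∈ Pa₀ i, r j < r i)

lemma mem_ancCl_self (i : V) : i ∈ ancCl Pa₀ r h0 i := by
  rw [ancCl]
  exact Finset.mem_insert_self i _

lemma ancCl_r_le (i : V) : ∀ j ∈ ancCl Pa₀ r h0 i, r j ≤ r i := by
  intro j hj
  rw [ancCl] at hj
  rcases Finset.mem_insert.1 hj with rfl | hj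
  · exact le_refl _
  · obtain ⟨k, _, hjk⟩ := Finset.mem_biUnion.1 hj
    have h1 := ancCl_r_le (k : V) j hjk
    exact h1.trans (le_of_lt (h0 i k k.2))
termination_by r i
decreasing_by exact h0 i _ k.2

lemma ancCl_r_lt {i j : V} (hj : j ∈ ancCl Pa₀ r h0 i) (hne : j ≠ i) : r j < r i := by
  rw [ancCl] at hj
  rcases Finset.mem_insert.1 hj with rfl | hj
  · exact absurd rfl hne
  · obtain ⟨k, _, hjk⟩ := Finset.mem_biUnion.1 hj
    exact lt_of_le_of_lt (ancCl_r_le h0 (k : V) j hjk) (h0 i k k.2)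

lemma ancCl_closed (i : V) : ∀ j ∈ ancCl Pa₀ r h0 i, Pa₀ j ⊆ ancCl Pa₀ r h0 i := by
  intro j hj
  rw [ancCl] at hj ⊢
  rcases Finset.mem_insert.1 hj with rfl | hj
  · intro k hk
    refine Finset.mem_insert_of_mem (Finset.mem_biUnion.2 ⟨⟨k, hk⟩, Finset.mem_attach _ _, ?_⟩)
    exact mem_ancCl_self h0 k
  · obtain ⟨k, hk, hjk⟩ := Finset.mem_biUnion.1 hj
    have h1 := ancCl_closed (k : V) j hjk
    intro a ha
    exact Finset.mem_insert_of_mem (Finset.mem_biUnion.2 ⟨k, hk, h1 ha⟩)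
termination_by r i
decreasing_by exact h0 i _ k.2

end closure

/-- Under MCAR missingness, if the joint distribution `p` of the DBN factorizes
according to the parent map `Pa₀` (the defining property of `(G₀, P₀)`) and
`G` is a DAG (acyclic, witnessed by the order `r`) containing `G₀`
(`Pa₀ i ⊆ Pa i` for all `i`), then the population node-average
log-likelihoods coincide: `l(G|G₀) = l(G₀|G₀)`. -/
theorem stmt_11 {V : Type*} [Fintype V] [DecidableEq V] {K : V → Type*}
    [∀ i, Fintype (K i)] [∀ i, DecidableEq (K i)]
    (p : (∀ i, K i) → ℝ) (hp : ∀ x, 0 ≤ p x) (hsum : ∑ x, p x = 1)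
    (Pa₀ Pa : V → Finset V)
    (r : V → ℕ) (hacyc : ∀ i, ∀ j ∈ Pa i, r j < r i)
    (hsub : ∀ i, Pa₀ i ⊆ Pa i)
    (hfact : ∀ x, p x = ∏ i, condP p i (Pa₀ i) x) :
    nal p Pa = nal p Pa₀ := by
  have h0 : ∀ i, ∀ j ∈ Pa₀ i, r j < r i := fun i j hj => hacyc i j (hsub i hj)
  unfold nal
  refine Finset.sum_congr rfl fun i _ => Finset.sum_congr rfl fun x _ => ?_
  by_cases hx : p x = 0
  · rw [hx, zero_mul, zero_mul]
  · have hpx : 0 < p x := lt_of_le_of_ne (hp x) (Ne.symm hx)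
    have hiPa : i ∉ Pa i := fun h => lt_irrefl _ (hacyc i i h)
    set A : Finset V := (insert i (Pa i)).biUnion (ancCl Pa₀ r h0) with hA
    have hsubA : insert i (Pa i) ⊆ A := by
      intro t ht
      exact Finset.mem_biUnion.2 ⟨t, ht, mem_ancCl_self h0 t⟩
    have hiA : i ∈ A := hsubA (Finset.mem_insert_self i _)
    have hAlt : ∀ k ∈ A, k ≠ i → r k < r i := by
      intro k hk hkne
      obtain ⟨t, ht, hkt⟩ := Finset.mem_biUnion.1 hk
      rcases Finset.mem_insert.1 ht with rfl | ht
      · exact ancCl_r_lt h0 hkt hkne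
      · exact lt_of_le_of_lt (ancCl_r_le h0 t k hkt) (hacyc i t ht)
    have hAanc : Anc Pa₀ A := by
      intro j hj a ha
      obtain ⟨t, ht, hjt⟩ := Finset.mem_biUnion.1 hj
      exact Finset.mem_biUnion.2 ⟨t, ht, ancCl_closed h0 t j hjt ha⟩
    have hA'anc : Anc Pa₀ (A.erase i) := by
      intro j hj a ha
      obtain ⟨hjne, hjA⟩ := Finset.mem_erase.1 hj
      have haA : a ∈ A := hAanc j hjA ha
      refine Finset.mem_erase.2 ⟨?_, haA⟩
      rintro rfl
      exact absurd (hAlt j hjA hjne) (not_lt.2 (le_of_lt (h0 j a ha)))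
    have hkey : ∀ (n : ℕ) (S : Finset V), (A \ S).card = n → insert i (Pa i) ⊆ S → S ⊆ A →
        ∀ z, margin p S z = condP p i (Pa₀ i) z * margin p (S.erase i) z := by
      intro n
      induction n with
      | zero =>
        intro S hS hS1 hS2 z
        have hAS : A ⊆ S := by
          rwa [Finset.card_eq_zero, Finset.sdiff_eq_empty_iff_subset] at hS
        have hSA : S = A := Finset.Subset.antisymm hS2 hAS
        subst hSA
        rw [margin_eq_prod p hp hsum h0 hfact _ hAanc z,
          margin_eq_prod p hp hsum h0 hfact _ hA'anc z,
          ← Finset.mul_prod_erase _ _ hiA]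
      | succ n ih =>
        intro S hS hS1 hS2 z
        have hne : (A \ S).Nonempty := Finset.card_pos.1 (by omega)
        obtain ⟨m, hm⟩ := hne
        obtain ⟨hmA, hmS⟩ := Finset.mem_sdiff.1 hm
        have hmi : m ≠ i := fun h => hmS (hS1 (h ▸ Finset.mem_insert_self i (Pa i)))
        have hcard : (A \ insert m S).card = n := by
          simp [Finset.sdiff_insert, Finset.card_erase_of_mem hm, hS]
        have hmPa : m ∉ insert i (Pa₀ i) := by
          intro h
          exact hmS (hS1 (Finset.insert_subset_insert i (hsub i) h))
        have hins : insert i (Pa i) ⊆ insert m S := hS1.trans (Finset.subset_insert m S)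
        have hinsA : insert m S ⊆ A := Finset.insert_subset hmA hS2
        have hrw : (insert m S).erase i = insert m (S.erase i) := by
          ext a
          simp only [Finset.mem_erase, Finset.mem_insert]
          constructor
          · rintro ⟨hne, h | h⟩
            · exact Or.inl h
            · exact Or.inr ⟨hne, h⟩
          · rintro (rfl | ⟨hne, h⟩)
            · exact ⟨hmi, Or.inl rfl⟩
            · exact ⟨hne, Or.inr h⟩
        have hmerase : m ∉ S.erase i := fun h => hmS (Finset.mem_of_mem_erase h)
        calc margin p S z = ∑ k, margin p (insert m S) (Function.update z m k) :=
              (sum_margin_insert p hmS z).symm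
          _ = ∑ k, condP p i (Pa₀ i) z
                * margin p ((insert m S).erase i) (Function.update z m k) := by
              refine Finset.sum_congr rfl fun k _ => ?_
              rw [ih _ hcard hins hinsA (Function.update z m k), condP_update p hmPa z k]
          _ = condP p i (Pa₀ i) z
                * ∑ k, margin p (insert m (S.erase i)) (Function.update z m k) := by
              rw [Finset.mul_sum]
              exact Finset.sum_congr rfl fun k _ => by rw [hrw]
          _ = condP p i (Pa₀ i) z * margin p (S.erase i) z := by
              rw [sum_margin_insert p hmerase z]
    have hmain := hkey (A \ insert i (Pa i)).card (insert i (Pa i)) rfl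
      (Finset.Subset.refl _) hsubA x
    rw [Finset.erase_insert hiPa] at hmain
    have hden : margin p (Pa i) x ≠ 0 :=
      ne_of_gt (lt_of_lt_of_le hpx (self_le_margin p hp _ x))
    have hcond : condP p i (Pa i) x = condP p i (Pa₀ i) x := by
      show margin p (insert i (Pa i)) x / margin p (Pa i) x = condP p i (Pa₀ i) x
      rw [hmain, mul_div_assoc, div_self hden, mul_one]
    rw [hcond]
end

section
/- Let G₀ be identifiable in a finite set 𝒢 of DAGs, let S(G|D_n) = l(G|D_n) − λ_n h(G) with h positive and increasing under strict graph inclusion, and suppose λ_n → 0. If G₁, G₂ ∈ 𝒢 with G₀ ⊆ G₁ and G₀ ⊄ G₂, then P(S(G₁|D_n) > S(G₂|D_n)) → 1 as n → ∞. -/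
open MeasureTheory Filter
open ENNReal

/-- Consistency condition (C1) for penalized node-average log-likelihood model
selection. `𝒢` is a finite set of DAGs (a fintype `ι`) with graph-inclusion
relation `incl`, `G₀` is identifiable (population score `lpop G < lpop G₀`
whenever `G₀ ⊄ G`, and `lpop G = lpop G₀` for `G ⊇ G₀`, as holds under MCAR),
the empirical node-average log-likelihoods `lemp n · G` converge in probability
to `lpop G` for each `G`, `h` is a positive complexity function increasing
under strict inclusion, and the penalties satisfy `λₙ → 0`. Then for
`S(G|Dₙ) = l(G|Dₙ) − λₙ h(G)`: if `G₀ ⊆ G₁` and `G₀ ⊄ G₂`, then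
`P(S(G₁|Dₙ) > S(G₂|Dₙ)) → 1`. -/
theorem stmt_17 {Ω ι : Type*} [MeasurableSpace Ω] (P : Measure Ω)
    [IsProbabilityMeasure P] [Fintype ι]
    (incl : ι → ι → Prop) (G₀ G₁ G₂ : ι)
    (lpop : ι → ℝ) (lemp : ℕ → Ω → ι → ℝ) (h : ι → ℝ) (lam : ℕ → ℝ)
    (hpos : ∀ G, 0 < h G)
    (hmono : ∀ G G', incl G G' → G ≠ G' → h G < h G')
    (hident_lt : ∀ G, ¬ incl G₀ G → lpop G < lpop G₀)
    (hident_eq : ∀ G, incl G₀ G → lpop G = lpop G₀)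
    (hconv : ∀ G, ∀ ε : ℝ, 0 < ε →
      Tendsto (fun n => P {ω | ε < |lemp n ω G - lpop G|}) atTop (nhds 0))
    (hlampos : ∀ n, 0 < lam n) (hlam : Tendsto lam atTop (nhds 0))
    (hG₁ : incl G₀ G₁) (hG₂ : ¬ incl G₀ G₂) :
    Tendsto
      (fun n => P {ω |
        lemp n ω G₂ - lam n * h G₂ < lemp n ω G₁ - lam n * h G₁})
      atTop (nhds 1) := by

  set δ := lpop G₀ - lpop G₂ with hδ
  have hδpos : 0 < δ := sub_pos.mpr (hident_lt G₂ hG₂)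
  have hεpos : 0 < δ/4 := by linarith
  -- eventually lam n * h G₁ < δ/4
  have hlamh : Tendsto (fun n => lam n * h G₁) atTop (nhds 0) := by
    simpa using hlam.mul_const (h G₁)
  have hev : ∀ᶠ n in atTop, lam n * h G₁ < δ/4 :=
    hlamh.eventually (eventually_lt_nhds hεpos)
  have hE₁ := hconv G₁ (δ/4) hεpos
  have hE₂ := hconv G₂ (δ/4) hεpos
  have hsum : Tendsto (fun n => P {ω | δ/4 < |lemp n ω G₁ - lpop G₁|}
      + P {ω | δ/4 < |lemp n ω G₂ - lpop G₂|}) atTop (nhds 0) := by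
    simpa using hE₁.add hE₂
  have hlow : Tendsto (fun n => (1 : ℝ≥0∞) - (P {ω | δ/4 < |lemp n ω G₁ - lpop G₁|}
      + P {ω | δ/4 < |lemp n ω G₂ - lpop G₂|})) atTop (nhds 1) := by
    have := ENNReal.Tendsto.sub (tendsto_const_nhds (x := (1:ℝ≥0∞))) hsum
      (Or.inl one_ne_top)
    simpa using this
  refine tendsto_of_tendsto_of_tendsto_of_le_of_le' hlow tendsto_const_nhds ?_ ?_
  · filter_upwards [hev] with n hn
    have hcover : (Set.univ : Set Ω) ⊆
        {ω | lemp n ω G₂ - lam n * h G₂ < lemp n ω G₁ - lam n * h G₁}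
        ∪ ({ω | δ/4 < |lemp n ω G₁ - lpop G₁|} ∪ {ω | δ/4 < |lemp n ω G₂ - lpop G₂|}) := by
      intro ω _
      by_cases h1 : δ/4 < |lemp n ω G₁ - lpop G₁|
      · exact Or.inr (Or.inl h1)
      by_cases h2 : δ/4 < |lemp n ω G₂ - lpop G₂|
      · exact Or.inr (Or.inr h2)
      left
      have hb1 := abs_le.mp (not_lt.mp h1)
      have hb2 := abs_le.mp (not_lt.mp h2)
      have he1 : lpop G₁ = lpop G₀ := hident_eq G₁ hG₁
      have hmul : 0 < lam n * h G₂ := mul_pos (hlampos n) (hpos G₂)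
      simp only [Set.mem_setOf_eq]
      simp only [hδ] at hn ⊢
      obtain ⟨a1, a2⟩ := hb1
      obtain ⟨b1, b2⟩ := hb2
      rw [he1] at a1 a2
      linarith
    have h1 : (1 : ℝ≥0∞) ≤ P {ω | lemp n ω G₂ - lam n * h G₂ < lemp n ω G₁ - lam n * h G₁}
        + (P {ω | δ/4 < |lemp n ω G₁ - lpop G₁|} + P {ω | δ/4 < |lemp n ω G₂ - lpop G₂|}) := by
      calc (1 : ℝ≥0∞) = P Set.univ := (measure_univ).symm
        _ ≤ P ({ω | lemp n ω G₂ - lam n * h G₂ < lemp n ω G₁ - lam n * h G₁}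
            ∪ ({ω | δ/4 < |lemp n ω G₁ - lpop G₁|} ∪ {ω | δ/4 < |lemp n ω G₂ - lpop G₂|})) :=
          measure_mono hcover
        _ ≤ _ := le_trans (measure_union_le _ _)
            (add_le_add (le_refl _) (measure_union_le _ _))
    exact tsub_le_iff_right.mpr h1
  · filter_upwards with n
    exact prob_le_one
end
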